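/- If X and Y are independent random variables over (Σ^t)^m such that each of X and Y m-simultaneously ε-fools a class F of functions from Σ^t to {0,1}, then the interleaved random variable X⋈Y = X₁Y₁X₂Y₂⋯X_mY_m 2ε-fools every width-w, length-2tm sliding-window branching program of window size t over Σ = {0,1}. -/

import Mathlib

/-- Probability of an event under the uniform distribution on a finite type. -/
noncomputable def unifPr (Ω : Type) [Fintype Ω] (P : Ω → Prop) : ℝ :=
  (Nat.card {ω // P ω} : ℝ) / (Fintype.card Ω)

/-- Bit strings of length `n`. -/
abbrev Bits (n : ℕ) := Fin n → Bool

/-- Extend a finite bit string to an infinite one (padding with `false`). -/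
def extBits {t : ℕ} (x : Bits t) : ℕ → Bool :=
  fun i => if h : i < t then x ⟨i, h⟩ else false

/-- A unanimity program of length `n` with state set `Q`: it has an initial state,
a transition function for each layer, and accepting state sets for each layer;
it accepts iff every state visited (after each of the `n` steps) is accepting. -/
structure UP (Q : Type) (n : ℕ) where
  init : Q
  trans : ℕ → Q → Bool → Q
  acc : ℕ → Q → Prop

namespace UP
variable {Q : Type} {n : ℕ}

/-- The state after reading `i` bits of `x`. -/
def st (P : UP Q n) (x : ℕ → Bool) : ℕ → Q
  | 0 => P.init
  | i + 1 => P.trans i (st P x i) (x i)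

/-- Unanimous acceptance: all states after steps `1, …, n` are accepting. -/
def accepts (P : UP Q n) (x : ℕ → Bool) : Prop :=
  ∀ i, 1 ≤ i → i ≤ n → P.acc i (st P x i)

/-- Running the program from state `q` at layer `i` on a word. -/
def runFrom (P : UP Q n) : ℕ → Q → List Bool → Q
  | _, q, [] => q
  | i, q, b :: bs => runFrom P (i + 1) (P.trans i q b) bs

/-- A state is reachable in layer `i` if some input leads to it. -/
def Reachable (P : UP Q n) (i : ℕ) (q : Q) : Prop :=
  ∃ x : ℕ → Bool, st P x i = q

/-- Sliding-window property of window size `t`: reading any `t`-bit word from any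
two reachable states of layer `i ≤ n - t` leads to the same state. -/
def IsSWBP (P : UP Q n) (t : ℕ) : Prop :=
  ∀ i, i ≤ n - t → ∀ y : List Bool, y.length = t →
    ∀ q q', Reachable P i q → Reachable P i q' →
      runFrom P i q y = runFrom P i q' y

/-- Acceptance of a length-`n` input. -/
def acceptsInput (P : UP Q n) (x : Bits n) : Prop := P.accepts (extBits x)

end UP

/-- Interleaving `x₁y₁x₂y₂⋯x_my_m` of two `m`-tuples of `t`-bit blocks, as an
infinite bit string (positions beyond `2tm` are `false`). -/
def il {m t : ℕ} (x y : Fin m → Bits t) : ℕ → Bool := fun j =>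
  if h : j / t / 2 < m ∧ j % t < t then
    (if (j / t) % 2 = 0 then x ⟨j / t / 2, h.1⟩ ⟨j % t, h.2⟩
     else y ⟨j / t / 2, h.1⟩ ⟨j % t, h.2⟩)
  else false

/-- `X` (a random variable on the finite uniform sample space `Ω`)
`m`-simultaneously `ε`-fools width-`w`, length-`t` unanimity programs. -/
noncomputable def SimulFools (w t m : ℕ) (ε : ℝ) {Ω : Type} [Fintype Ω]
    (X : Ω → Fin m → Bits t) : Prop :=
  ∀ f : Fin m → UP (Fin w) t,
    |unifPr Ω (fun ω => ∀ i, (f i).acceptsInput (X ω i)) -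
      ∏ i : Fin m, unifPr (Bits t) (fun u => (f i).acceptsInput u)| ≤ ε

/-- `X` `m`-simultaneously `ε`-hits width-`w`, length-`t` unanimity programs. -/
noncomputable def SimulHits (w t m : ℕ) (ε : ℝ) {Ω : Type} [Fintype Ω]
    (X : Ω → Fin m → Bits t) : Prop :=
  ∀ f : Fin m → UP (Fin w) t,
    unifPr (Fin m → Bits t) (fun u => ∀ i, (f i).acceptsInput (u i)) ≥ ε →
    ∃ ω, ∀ i, (f i).acceptsInput (X ω i)

/-- A generator `G` `ε`-fools width-`w`, length-`t` unanimity programs. -/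
noncomputable def Fools (w t d : ℕ) (ε : ℝ) (G : Bits d → Bits t) : Prop :=
  ∀ P : UP (Fin w) t,
    |unifPr (Bits d) (fun s => P.acceptsInput (G s)) -
      unifPr (Bits t) (fun u => P.acceptsInput u)| ≤ ε

/-- Statistical distance between (the distributions of) two random variables. -/
noncomputable def SD {Ω₁ Ω₂ V : Type} [Fintype Ω₁] [Fintype Ω₂] [Fintype V]
    (X : Ω₁ → V) (Y : Ω₂ → V) : ℝ :=
  (1 / 2) * ∑ v : V, |unifPr Ω₁ (fun ω => X ω = v) - unifPr Ω₂ (fun ω => Y ω = v)|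

/-- A `(k, ε)`-extractor: for every source of min-entropy at least `k`
(every point has probability at most `2^(-k)`), the output is `ε`-close to uniform. -/
noncomputable def IsExtractor {nn dd mm : ℕ} (k ε : ℝ)
    (Ext : Bits nn → Bits dd → Bits mm) : Prop :=
  ∀ (Ω : Type) [Fintype Ω], ∀ Z : Ω → Bits nn,
    (∀ v, unifPr Ω (fun ω => Z ω = v) ≤ (2 : ℝ) ^ (-k)) →
    SD (fun p : Ω × Bits dd => Ext (Z p.1) p.2) (id : Bits mm → Bits mm) ≤ ε

/-- A standard (ordered read-once) branching program: accepts based only on its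
final state. -/
structure BP (Q : Type) (n : ℕ) where
  init : Q
  trans : ℕ → Q → Bool → Q
  accFinal : Q → Prop

namespace BP
variable {Q : Type} {n : ℕ}

def st (P : BP Q n) (x : ℕ → Bool) : ℕ → Q
  | 0 => P.init
  | i + 1 => P.trans i (st P x i) (x i)

def acceptsInput (P : BP Q n) (x : Bits n) : Prop := P.accFinal (st P (extBits x) n)

def runFrom (P : BP Q n) : ℕ → Q → List Bool → Q
  | _, q, [] => q
  | i, q, b :: bs => runFrom P (i + 1) (P.trans i q b) bs

def Reachable (P : BP Q n) (i : ℕ) (q : Q) : Prop :=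
  ∃ x : ℕ → Bool, st P x i = q

end BP

/-- A probabilistic ACA (PACA): two local transition functions selected by a coin,
with boundary symbols modeled via `Option`, and a set of accepting states. -/
structure PACA (Q : Type) where
  delta : Bool → Option Q → Q → Option Q → Q
  acc : Q → Prop

/-- Neighboring cell content (`none` beyond the boundary). -/
def nbOpt {Q : Type} {n : ℕ} (s : Fin n → Q) (j : ℤ) : Option Q :=
  if h : 0 ≤ j ∧ j < n then some (s ⟨j.toNat, by omega⟩) else none

namespace PACA
variable {Q : Type} {n : ℕ}

/-- One global step with coin tosses `r` (cell `i` uses `δ_{r i}`). -/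
def step (C : PACA Q) (s : Fin n → Q) (r : Fin n → Bool) : Fin n → Q :=
  fun i => C.delta (r i) (nbOpt s ((i : ℤ) - 1)) (s i) (nbOpt s ((i : ℤ) + 1))

/-- The configuration after `k` steps on input `x` with coin matrix `R`. -/
def conf (C : PACA Q) (x : Fin n → Q) (R : ℕ → Fin n → Bool) : ℕ → Fin n → Q
  | 0 => x
  | k + 1 => C.step (conf C x R k) (R k)

/-- All cells are simultaneously accepting. -/
def allAcc (C : PACA Q) (s : Fin n → Q) : Prop := ∀ i, C.acc (s i)

end PACA

/-- Extend a `T × n` coin matrix to all times (all-`false` rows beyond `T`). -/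
def extR {T n : ℕ} (R : Fin T → Fin n → Bool) : ℕ → Fin n → Bool :=
  fun k => if h : k < T then R ⟨k, h⟩ else fun _ => false

/-- Simultaneous hitting for an abstract class `F` of predicates on `V`. -/
noncomputable def SimulHitsF {V : Type} [Fintype V] (F : Set (V → Prop)) (m : ℕ) (ε : ℝ)
    {Ω : Type} [Fintype Ω] (X : Ω → Fin m → V) : Prop :=
  ∀ f : Fin m → V → Prop, (∀ i, f i ∈ F) →
    unifPr (Fin m → V) (fun u => ∀ i, f i (u i)) ≥ ε →
    ∃ ω, ∀ i, f i (X ω i)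

/-! Hybrid argument. For fixed `y`, the sliding-window property makes the state of `S` at the
start of each block `xᵢ` a function of the preceding block `yᵢ₋₁` alone, so `x ↦ S (x ⋈ y)` is a
conjunction of width-`w`, length-`t` unanimity programs, one reading each `xᵢ` (and checking the
following `t` layers, which are then determined by `yᵢ`). Replacing `X` by a uniform `U` therefore
costs at most `ε`, and symmetrically replacing `Y`; finally `U ⋈ U'` is uniform on `2tm` bits. -/

section UniformProbability

theorem unifPr_congr {Ω : Type} [Fintype Ω] {P P' : Ω → Prop} (h : ∀ ω, P ω ↔ P' ω) :
    unifPr Ω P = unifPr Ω P' :=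
  congrArg _ (funext fun ω => propext (h ω))

theorem unifPr_comp_equiv {A B : Type} [Fintype A] [Fintype B] (e : A ≃ B) (P : B → Prop) :
    unifPr A (fun a => P (e a)) = unifPr B P := by
  rw [unifPr, unifPr, Nat.card_congr (e.subtypeEquiv fun _ => Iff.rfl), Fintype.card_congr e]

theorem unifPr_pi (V : Type) [Fintype V] (m : ℕ) (f : Fin m → V → Prop) :
    unifPr (Fin m → V) (fun u => ∀ i, f i (u i)) = ∏ i, unifPr V (f i) := by
  simp only [unifPr]
  rw [Nat.card_congr (Equiv.subtypePiEquivPi (p := fun i v => f i v)), Nat.card_pi]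
  push_cast
  rw [Finset.prod_div_distrib]
  simp [Fintype.card_pi]

open scoped Classical in
theorem unifPr_prod (A B : Type) [Fintype A] [Fintype B] (P : A × B → Prop) :
    unifPr (A × B) P = (∑ b, unifPr A (fun a => P (a, b))) / Fintype.card B := by
  simp only [unifPr, Nat.card_eq_fintype_card, Fintype.card_subtype, Finset.card_filter,
    Fintype.card_prod, Fintype.sum_prod_type]
  rw [Finset.sum_comm, Finset.sum_div]
  push_cast
  rw [Finset.sum_div]
  refine Finset.sum_congr rfl fun b _ => ?_
  rw [div_div, mul_comm]

theorem abs_unifPr_prod_sub_le {A A' B : Type} [Fintype A] [Fintype A'] [Fintype B] {ε : ℝ}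
    (hε : 0 ≤ ε) {P : A × B → Prop} {P' : A' × B → Prop}
    (h : ∀ b, |unifPr A (fun a => P (a, b)) - unifPr A' (fun a => P' (a, b))| ≤ ε) :
    |unifPr (A × B) P - unifPr (A' × B) P'| ≤ ε := by
  rw [unifPr_prod, unifPr_prod]
  rcases (Fintype.card B).eq_zero_or_pos with h0 | h0
  · simp [h0, hε]
  rw [← sub_div, ← Finset.sum_sub_distrib, abs_div, Nat.abs_cast, div_le_iff₀ (by positivity)]
  calc |∑ b, (unifPr A (fun a => P (a, b)) - unifPr A' (fun a => P' (a, b)))|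
      ≤ ∑ b, |unifPr A (fun a => P (a, b)) - unifPr A' (fun a => P' (a, b))| :=
        Finset.abs_sum_le_sum_abs _ _
    _ ≤ ∑ _b : B, ε := Finset.sum_le_sum fun b _ => h b
    _ = ε * Fintype.card B := by simp [mul_comm]

end UniformProbability

namespace UP

variable {Q : Type} {n : ℕ} (P : UP Q n)

theorem runFrom_append (i : ℕ) (q : Q) (l l' : List Bool) :
    P.runFrom i q (l ++ l') = P.runFrom (i + l.length) (P.runFrom i q l) l' := by
  induction l generalizing i q with
  | nil => rfl
  | cons b l ih => simp only [List.cons_append, runFrom, ih, List.length_cons, add_assoc,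
      add_comm 1]

theorem st_add (z : ℕ → Bool) (a k : ℕ) :
    P.st z (a + k) = P.runFrom a (P.st z a) (List.ofFn fun j : Fin k => z (a + j)) := by
  induction k with
  | zero => rfl
  | succ k ih =>
    rw [List.ofFn_succ', List.concat_eq_append, runFrom_append]
    simp only [Fin.val_castSucc, ← ih, List.length_ofFn, Fin.val_last, runFrom, ← add_assoc]
    rfl

theorem st_congr {z z' : ℕ → Bool} {k : ℕ} (h : ∀ j < k, z j = z' j) :
    P.st z k = P.st z' k := by
  induction k with
  | zero => rfl
  | succ k ih => simp only [st, ih fun j hj => h j (by omega), h k k.lt_succ_self]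

theorem IsSWBP.st_add_eq {P : UP Q n} {t : ℕ} (hS : P.IsSWBP t) {b : ℕ} (hb : b + t ≤ n)
    {z z' : ℕ → Bool} (h : ∀ j < t, z (b + j) = z' (b + j)) :
    P.st z (b + t) = P.st z' (b + t) := by
  rw [st_add, st_add, List.ofFn_inj.mpr (funext fun j : Fin t => h j j.isLt)]
  exact hS b (by omega) _ List.length_ofFn _ _ ⟨z, rfl⟩ ⟨z', rfl⟩

/-- A block of `t` free bits at layer `a` of the background input `z₀`. As the `t` bits after it
are those of `z₀`, its last layer can also check the next `t` layers of `P`. -/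
def block (z₀ : ℕ → Bool) (a t : ℕ) (c : Prop) : UP Q t where
  init := P.st z₀ a
  trans k := P.trans (a + k)
  acc k q := c ∧ P.acc (a + k) q ∧ (k = t → ∀ k', 1 ≤ k' → k' ≤ t → a + t + k' ≤ n →
    P.acc (a + t + k') (P.runFrom (a + t) q (List.ofFn fun j : Fin k' => z₀ (a + t + j))))

theorem runFrom_block (z₀ : ℕ → Bool) (a t : ℕ) (c : Prop) (i : ℕ) (q : Q) (l : List Bool) :
    (P.block z₀ a t c).runFrom i q l = P.runFrom (a + i) q l := by
  induction l generalizing i q with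
  | nil => rfl
  | cons b l ih => exact ih (i + 1) _

theorem st_block (z₀ : ℕ → Bool) (a t : ℕ) (c : Prop) (v : ℕ → Bool) (k : ℕ) :
    (P.block z₀ a t c).st v k = P.runFrom a (P.st z₀ a) (List.ofFn fun j : Fin k => v j) := by
  have h := (P.block z₀ a t c).st_add v 0 k
  simp only [zero_add] at h
  rw [h, runFrom_block, add_zero]
  rfl

theorem acceptsInput_block_iff {z₀ z : ℕ → Bool} {a t : ℕ} {c : Prop} {u : Bits t} (ht : 0 < t)
    (hstart : P.st z a = P.st z₀ a) (hu : ∀ j : Fin t, z (a + j) = u j)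
    (hcont : ∀ j < t, z (a + t + j) = z₀ (a + t + j)) :
    (P.block z₀ a t c).acceptsInput u ↔ c ∧ ∀ k, 1 ≤ k → k ≤ t →
      P.acc (a + k) (P.st z (a + k)) ∧
        (a + t + k ≤ n → P.acc (a + t + k) (P.st z (a + t + k))) := by
  have hst : ∀ k ≤ t, (P.block z₀ a t c).st (extBits u) k = P.st z (a + k) := by
    intro k hk
    rw [st_block, st_add, hstart, List.ofFn_inj.mpr (funext fun j : Fin k => ?_)]
    have hj : (j : ℕ) < t := by omega
    simp only [extBits, hj, dite_true, ← hu ⟨j, hj⟩]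
  have hnext : ∀ k ≤ t, P.runFrom (a + t) (P.st z (a + t))
      (List.ofFn fun j : Fin k => z₀ (a + t + j)) = P.st z (a + t + k) := by
    intro k hk
    rw [st_add P z (a + t) k, List.ofFn_inj.mpr (funext fun j : Fin k => hcont j (by omega))]
  constructor
  · intro h
    obtain ⟨hc, -, hlast⟩ := h t ht le_rfl
    rw [hst t le_rfl] at hlast
    refine ⟨hc, fun k hk1 hkt => ⟨?_, fun hn => ?_⟩⟩
    · obtain ⟨-, hk, -⟩ := h k hk1 hkt
      rwa [hst k hkt] at hk
    · rw [← hnext k hkt]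
      exact hlast rfl k hk1 hkt hn
  · rintro ⟨hc, h⟩ k hk1 hkt
    refine ⟨hc, ?_, fun hk k' hk1' hkt' hn => ?_⟩
    · rw [hst k hkt]
      exact (h k hk1 hkt).1
    · subst hk
      rw [hst _ le_rfl, hnext k' hkt']
      exact (h k' hk1' hkt').2 hn

end UP

theorem forall_Icc_iff_forall_blocks {t m a₀ : ℕ} (ha₀ : a₀ ≤ t) (A : ℕ → Prop) :
    (∀ j, 1 ≤ j → j ≤ 2 * t * m → A j) ↔ ∀ i : Fin m,
      ((i : ℕ) = 0 → ∀ j, 1 ≤ j → j ≤ a₀ → A j) ∧ ∀ k, 1 ≤ k → k ≤ t →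
        A (2 * t * i + a₀ + k) ∧
          (2 * t * i + a₀ + t + k ≤ 2 * t * m → A (2 * t * i + a₀ + t + k)) := by
  constructor
  · intro h i
    have hi : 2 * t * (i + 1) ≤ 2 * t * m := Nat.mul_le_mul_left _ i.isLt
    rw [mul_add_one] at hi
    exact ⟨fun _ j h1 h2 => h j h1 (by omega),
      fun k h1 h2 => ⟨h _ (by omega) (by omega), h _ (by omega)⟩⟩
  · intro h j h1 h2
    by_cases hj : j ≤ a₀
    · have hm : 0 < m := Nat.pos_of_ne_zero (by rintro rfl; simp at h2; omega)
      exact (h ⟨0, hm⟩).1 rfl j h1 hj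
    have ht : 0 < 2 * t := by
      rcases Nat.eq_zero_or_pos t with rfl | ht
      · simp at h2; omega
      · omega
    set i := (j - a₀ - 1) / (2 * t)
    set r := (j - a₀ - 1) % (2 * t)
    have hdiv : 2 * t * i + r = j - a₀ - 1 := Nat.div_add_mod _ _
    have hr : r < 2 * t := Nat.mod_lt _ ht
    have hi : i < m := by
      by_contra! hmi
      have := Nat.mul_le_mul_left (2 * t) hmi
      omega
    by_cases hrt : r < t
    · have := ((h ⟨i, hi⟩).2 (r + 1) (by omega) (by omega)).1
      rwa [show 2 * t * i + a₀ + (r + 1) = j by omega] at this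
    · have := ((h ⟨i, hi⟩).2 (r - t + 1) (by omega) (by omega)).2
      rw [show 2 * t * i + a₀ + t + (r - t + 1) = j by omega] at this
      exact this h2

namespace UP

variable {Q : Type} {t m : ℕ}

/-- The free blocks of `z` start at layers `2ti + a₀` (`a₀ = 0` for `x`, `a₀ = t` for `y`); the
layers `1, …, a₀` before the first one are checked by block `0` through its side condition. -/
theorem IsSWBP.accepts_iff_forall_acceptsInput_block {P : UP Q (2 * t * m)} (hS : P.IsSWBP t)
    {a₀ : ℕ} (ha₀ : a₀ ≤ t) {z₀ z : ℕ → Bool} {u : Fin m → Bits t}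
    (hpre : ∀ j < a₀, z j = z₀ j)
    (hu : ∀ (i : Fin m) (k : Fin t), z (2 * t * i + a₀ + k) = u i k)
    (hcont : ∀ i < m, ∀ k < t, z (2 * t * i + a₀ + t + k) = z₀ (2 * t * i + a₀ + t + k)) :
    P.accepts z ↔ ∀ i : Fin m, (P.block z₀ (2 * t * i + a₀) t
      ((i : ℕ) = 0 → ∀ j, 1 ≤ j → j ≤ a₀ → P.acc j (P.st z₀ j))).acceptsInput (u i) := by
  rcases Nat.eq_zero_or_pos t with rfl | ht
  · exact iff_of_true (fun j _ hj => by simp at hj; omega) (fun i k _ hk => by omega)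
  -- the window property: a block is entered in a state fixed by the `t` bits before it
  have hstart : ∀ i < m, P.st z (2 * t * i + a₀) = P.st z₀ (2 * t * i + a₀) := by
    rintro (_ | i) hi
    · exact P.st_congr fun j hj => hpre j (by simpa using hj)
    · have hle : 2 * t * (i + 2) ≤ 2 * t * m := Nat.mul_le_mul_left _ hi
      rw [show 2 * t * (i + 1) + a₀ = 2 * t * i + a₀ + t + t by ring]
      exact hS.st_add_eq (by linarith) (hcont i (by omega))
  rw [accepts, forall_Icc_iff_forall_blocks ha₀]
  refine forall_congr' fun i => ?_
  rw [P.acceptsInput_block_iff ht (hstart i i.isLt) (hu i) (hcont i i.isLt)]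
  refine and_congr (imp_congr_right fun _ => forall₃_congr fun j _ hj => ?_) Iff.rfl
  rw [P.st_congr fun j' hj' => hpre j' (by omega)]

end UP

section Interleave

variable {t m : ℕ}

theorem il_mul_add (x y : Fin m → Bits t) (c : ℕ) {k : ℕ} (hk : k < t) :
    il x y (t * c + k) = if h : c / 2 < m then
      (if c % 2 = 0 then x ⟨c / 2, h⟩ ⟨k, hk⟩ else y ⟨c / 2, h⟩ ⟨k, hk⟩) else false := by
  have hdiv : (t * c + k) / t = c := by
    rw [Nat.mul_add_div (by omega), Nat.div_eq_of_lt hk, add_zero]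
  have hmod : (t * c + k) % t = k := by rw [Nat.mul_add_mod, Nat.mod_eq_of_lt hk]
  simp only [il, hdiv, hmod, hk, and_true]

theorem il_apply_left (x y : Fin m → Bits t) {i k : ℕ} (hi : i < m) (hk : k < t) :
    il x y (2 * t * i + k) = x ⟨i, hi⟩ ⟨k, hk⟩ := by
  rw [show 2 * t * i + k = t * (2 * i) + k by ring, il_mul_add x y _ hk]
  simp [hi]

theorem il_apply_right (x y : Fin m → Bits t) {i k : ℕ} (hi : i < m) (hk : k < t) :
    il x y (2 * t * i + t + k) = y ⟨i, hi⟩ ⟨k, hk⟩ := by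
  rw [show 2 * t * i + t + k = t * (2 * i + 1) + k by ring, il_mul_add x y _ hk]
  simp [hi, Nat.add_div_of_dvd_right, Nat.add_mod]

theorem il_left_congr (x y y' : Fin m → Bits t) (i : ℕ) {k : ℕ} (hk : k < t) :
    il x y (2 * t * i + k) = il x y' (2 * t * i + k) := by
  rw [show 2 * t * i + k = t * (2 * i) + k by ring, il_mul_add x y _ hk, il_mul_add x y' _ hk]
  simp

theorem il_of_le (x y : Fin m → Bits t) {j : ℕ} (hj : 2 * t * m ≤ j) : il x y j = false := by
  refine dif_neg fun ⟨hlt, hmod⟩ => ?_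
  rw [Nat.div_div_eq_div_mul, Nat.div_lt_iff_lt_mul (by omega)] at hlt
  linarith

theorem extBits_il (x y : Fin m → Bits t) :
    extBits (fun j : Fin (2 * t * m) => il x y j) = il x y := by
  funext j
  by_cases hj : j < 2 * t * m
  · simp [extBits, hj]
  · simp [extBits, hj, il_of_le x y (not_lt.mp hj)]

end Interleave

namespace UP.IsSWBP

variable {Q : Type} {t m : ℕ} {S : UP Q (2 * t * m)}

theorem exists_accepts_il_iff_left (hS : S.IsSWBP t) (y : Fin m → Bits t) :
    ∃ f : Fin m → UP Q t, ∀ x, S.accepts (il x y) ↔ ∀ i, (f i).acceptsInput (x i) :=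
  ⟨_, fun x => hS.accepts_iff_forall_acceptsInput_block t.zero_le
    (z₀ := il (fun _ _ => false) y)
    (fun j hj => absurd hj (Nat.not_lt_zero j)) (fun i k => il_apply_left x y i.isLt k.isLt)
    fun i hi k hk => by rw [add_zero, il_apply_right x y hi hk, il_apply_right _ y hi hk]⟩

theorem exists_accepts_il_iff_right (hS : S.IsSWBP t) (x : Fin m → Bits t) :
    ∃ f : Fin m → UP Q t, ∀ y, S.accepts (il x y) ↔ ∀ i, (f i).acceptsInput (y i) :=
  ⟨_, fun y => hS.accepts_iff_forall_acceptsInput_block le_rfl (z₀ := il x fun _ _ => false)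
    (fun j hj => by simpa using il_left_congr x y _ 0 hj)
    (fun i k => il_apply_right x y i.isLt k.isLt)
    fun i _ k hk => by
      rw [show 2 * t * i + t + t + k = 2 * t * (i + 1) + k by ring, il_left_congr x y _ _ hk]⟩

end UP.IsSWBP

theorem unifPr_comp_il {t m : ℕ} (P : (ℕ → Bool) → Prop) :
    unifPr ((Fin m → Bits t) × (Fin m → Bits t)) (fun p => P (il p.1 p.2)) =
      unifPr (Bits (2 * t * m)) (fun u => P (extBits u)) := by
  let toBits : (Fin m → Bits t) × (Fin m → Bits t) → Bits (2 * t * m) :=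
    fun p j => il p.1 p.2 j
  have hinj : toBits.Injective := by
    rintro ⟨x, y⟩ ⟨x', y'⟩ h
    have hblock : ∀ i : Fin m, 2 * t * i + 2 * t ≤ 2 * t * m := fun i => by
      simpa [mul_add_one] using Nat.mul_le_mul_left (2 * t) i.isLt
    ext i k : 3
    · have := congrFun h ⟨2 * t * i + k, by linarith [hblock i, k.isLt]⟩
      simpa [toBits, il_apply_left _ _ i.isLt k.isLt] using this
    · have := congrFun h ⟨2 * t * i + t + k, by linarith [hblock i, k.isLt]⟩
      simpa [toBits, il_apply_right _ _ i.isLt k.isLt] using this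
  have hcard : Fintype.card ((Fin m → Bits t) × (Fin m → Bits t)) =
      Fintype.card (Bits (2 * t * m)) := by
    simp only [Fintype.card_prod, Fintype.card_fun, Fintype.card_bool, Fintype.card_fin,
      ← pow_mul, ← pow_add]
    ring_nf
  have hbij : toBits.Bijective := (Fintype.bijective_iff_injective_and_card _).mpr ⟨hinj, hcard⟩
  rw [← unifPr_comp_equiv (Equiv.ofBijective _ hbij)]
  exact unifPr_congr fun p => by simp [toBits, extBits_il]

namespace SimulFools

variable {w t m : ℕ} {ε : ℝ}

theorem abs_unifPr_prod_fst_sub_le {Ω B : Type} [Fintype Ω] [Fintype B] {X : Ω → Fin m → Bits t}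
    (hX : SimulFools w t m ε X) (hε : 0 ≤ ε) (P : (Fin m → Bits t) → B → Prop)
    (hP : ∀ b, ∃ f : Fin m → UP (Fin w) t, ∀ x, P x b ↔ ∀ i, (f i).acceptsInput (x i)) :
    |unifPr (Ω × B) (fun ω => P (X ω.1) ω.2) -
      unifPr ((Fin m → Bits t) × B) (fun ω => P ω.1 ω.2)| ≤ ε := by
  refine _root_.abs_unifPr_prod_sub_le hε fun b => ?_
  obtain ⟨f, hf⟩ := hP b
  rw [unifPr_congr fun ω => hf (X ω), unifPr_congr hf, unifPr_pi]
  exact hX f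

theorem abs_unifPr_prod_snd_sub_le {Ω A : Type} [Fintype Ω] [Fintype A] {Y : Ω → Fin m → Bits t}
    (hY : SimulFools w t m ε Y) (hε : 0 ≤ ε) (P : A → (Fin m → Bits t) → Prop)
    (hP : ∀ a, ∃ f : Fin m → UP (Fin w) t, ∀ y, P a y ↔ ∀ i, (f i).acceptsInput (y i)) :
    |unifPr (A × Ω) (fun ω => P ω.1 (Y ω.2)) -
      unifPr (A × (Fin m → Bits t)) (fun ω => P ω.1 ω.2)| ≤ ε := by
  rw [← unifPr_comp_equiv (Equiv.prodComm Ω A), ← unifPr_comp_equiv (Equiv.prodComm _ A)]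
  exact hY.abs_unifPr_prod_fst_sub_le hε (fun y a => P a y) hP

end SimulFools

/-- If independent `X` and `Y` each `m`-simultaneously `ε`-fool
width-`w`, length-`t` unanimity programs, then `X ⋈ Y` `2ε`-fools every
width-`w`, length-`2tm` SWBP of window size `t`. -/
theorem interleave_fools_swbp {w t m : ℕ} {ε : ℝ}
    {Ω₁ Ω₂ : Type} [Fintype Ω₁] [Fintype Ω₂]
    (X : Ω₁ → Fin m → Bits t) (Y : Ω₂ → Fin m → Bits t)
    (hX : SimulFools w t m ε X) (hY : SimulFools w t m ε Y)
    (S : UP (Fin w) (2 * t * m)) (hS : S.IsSWBP t) :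
    |unifPr (Ω₁ × Ω₂) (fun ω => S.accepts (il (X ω.1) (Y ω.2))) -
      unifPr (Bits (2 * t * m)) (fun u => S.acceptsInput u)| ≤ 2 * ε := by
  have hε : 0 ≤ ε := (abs_nonneg _).trans (hX fun _ => ⟨S.init, S.trans, S.acc⟩)
  have hXstep := hX.abs_unifPr_prod_fst_sub_le hε (fun x ω₂ => S.accepts (il x (Y ω₂)))
    fun ω₂ => hS.exists_accepts_il_iff_left (Y ω₂)
  have hYstep := hY.abs_unifPr_prod_snd_sub_le hε (fun x y => S.accepts (il x y))
    hS.exists_accepts_il_iff_right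
  have hunif : unifPr ((Fin m → Bits t) × (Fin m → Bits t)) (fun ω => S.accepts (il ω.1 ω.2)) =
      unifPr (Bits (2 * t * m)) (fun u => S.acceptsInput u) := unifPr_comp_il S.accepts
  rw [hunif] at hYstep
  calc _ ≤ _ := abs_sub_le _ _ _
    _ ≤ ε + ε := add_le_add hXstep hYstep
    _ = 2 * ε := (two_mul ε).symm
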